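/- arXiv:2011.02545 — 2 statements merged into one kernel-verified Lean document; each statement's English description precedes it below -/
import Mathlib

section
/- Let H be a separable Hilbert space and U, W ∈ B(H) with W invertible and U unitary. Suppose that for each m ∈ ℕ there is a strictly increasing sequence {n_k} ⊆ ℕ such that for every k the series Σ_{l=1}^∞ ‖W^{l n_k} P_m‖ and Σ_{l=1}^∞ ‖W^{−l n_k} P_m‖ converge, and both sums tend to 0 as k → ∞. Then the sets of periodic elements of {T_{U,W}^n} and of {S_{U,W}^n} are each dense in B_0(H). -/
set_option linter.unusedSectionVars false
set_option linter.unusedVariables false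

open scoped InnerProductSpace
open Filter

noncomputable section

variable {H : Type*} [NormedAddCommGroup H] [InnerProductSpace ℂ H] [CompleteSpace H]

/-- `m(F) := inf_{‖x‖=1} ‖F x‖`. -/
def mop (F : H →L[ℂ] H) : ℝ := ⨅ x : {x : H // ‖x‖ = 1}, ‖F x‖

/-- The orthogonal projection onto a finite-dimensional subspace, as an endomorphism of `H`. -/
def projCLM (K : Submodule ℂ H) (hK : FiniteDimensional ℂ K) : H →L[ℂ] H :=
  letI := hK
  letI : CompleteSpace K := FiniteDimensional.complete ℂ K
  K.subtypeL ∘L K.orthogonalProjectionOnto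

/-- `L_m`, the span of the first `m` basis vectors. -/
def Lspan (b : HilbertBasis ℕ ℂ H) (m : ℕ) : Submodule ℂ H :=
  Submodule.span ℂ (b '' Set.Iio m)

theorem Lspan_fd (b : HilbertBasis ℕ ℂ H) (m : ℕ) : FiniteDimensional ℂ (Lspan b m) :=
  FiniteDimensional.span_of_finite ℂ ((Set.finite_Iio m).image b)

/-- `P_m`, the orthogonal projection onto `L_m`. -/
def Pproj (b : HilbertBasis ℕ ℂ H) (m : ℕ) : H →L[ℂ] H := projCLM (Lspan b m) (Lspan_fd b m)

/-- `T_{U,W}^n (F) = W^n F U^n`. -/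
def Tpow (W : H ≃L[ℂ] H) (U : H →L[ℂ] H) (n : ℕ) (F : H →L[ℂ] H) : H →L[ℂ] H :=
  ((W : H →L[ℂ] H) ^ n) ∘L F ∘L (U ^ n)

/-- `S_{U,W}^n (F) = W^{-n} F U^{-n}` (here `U⁻¹ = star U` since `U` is unitary). -/
def Spow (W : H ≃L[ℂ] H) (U : H →L[ℂ] H) (n : ℕ) (F : H →L[ℂ] H) : H →L[ℂ] H :=
  ((W.symm : H →L[ℂ] H) ^ n) ∘L F ∘L ((star U) ^ n)

/-- The cosine operator function `C^{(n)} = (1/2)(T^n + S^n)`. -/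
def Cpow (W : H ≃L[ℂ] H) (U : H →L[ℂ] H) (n : ℕ) (F : H →L[ℂ] H) : H →L[ℂ] H :=
  (2 : ℂ)⁻¹ • (Tpow W U n F + Spow W U n F)

/-- `B₀(H)`, the compact operators on `H`, as a submodule of `B(H)`. -/
def B0 : Submodule ℂ (H →L[ℂ] H) := compactOperator (RingHom.id ℂ) H H

theorem Tpow_mem (W : H ≃L[ℂ] H) (U : H →L[ℂ] H) (n : ℕ) (F : H →L[ℂ] H)
    (hF : IsCompactOperator F) : Tpow W U n F ∈ B0 (H := H) :=
  (hF.comp_clm (U ^ n)).clm_comp ((W : H →L[ℂ] H) ^ n)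

theorem Spow_mem (W : H ≃L[ℂ] H) (U : H →L[ℂ] H) (n : ℕ) (F : H →L[ℂ] H)
    (hF : IsCompactOperator F) : Spow W U n F ∈ B0 (H := H) :=
  (hF.comp_clm ((star U) ^ n)).clm_comp ((W.symm : H →L[ℂ] H) ^ n)

theorem Cpow_mem (W : H ≃L[ℂ] H) (U : H →L[ℂ] H) (n : ℕ) (F : H →L[ℂ] H)
    (hF : IsCompactOperator F) : Cpow W U n F ∈ B0 (H := H) :=
  Submodule.smul_mem _ _ (Submodule.add_mem _ (Tpow_mem W U n F hF) (Spow_mem W U n F hF))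

/-- `T^n` as a map of `B₀(H)`. -/
def TB0 (W : H ≃L[ℂ] H) (U : H →L[ℂ] H) (n : ℕ) (F : B0 (H := H)) : B0 (H := H) :=
  ⟨Tpow W U n F.1, Tpow_mem W U n F.1 F.2⟩

/-- `C^{(n)}` as a map of `B₀(H)`. -/
def CB0 (W : H ≃L[ℂ] H) (U : H →L[ℂ] H) (n : ℕ) (F : B0 (H := H)) : B0 (H := H) :=
  ⟨Cpow W U n F.1, Cpow_mem W U n F.1 F.2⟩

/-- The absolute value `|G| = sqrt(G* G)` of an operator. -/
def absop (G : H →L[ℂ] H) : H →L[ℂ] H := CFC.sqrt (star G * G)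

/-- The trace computed in the orthonormal basis `b`. -/
def trB (b : HilbertBasis ℕ ℂ H) (A : H →L[ℂ] H) : ℂ := ∑' j, ⟪b j, A (b j)⟫_ℂ

/-- `G` is trace class (w.r.t. the basis `b`): the trace of `|G|` converges. -/
def IsTraceClassB (b : HilbertBasis ℕ ℂ H) (G : H →L[ℂ] H) : Prop :=
  Summable fun j => ⟪b j, absop G (b j)⟫_ℂ

/-- The trace norm `‖G‖₁ = tr |G|` computed in the basis `b`. -/
def traceNormB (b : HilbertBasis ℕ ℂ H) (G : H →L[ℂ] H) : ℝ :=
  ∑' j, (⟪b j, absop G (b j)⟫_ℂ).re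

/-- `L_n` for a basis indexed by positive integers. -/
def LspanP (b : HilbertBasis ℕ+ ℂ H) (n : ℕ) : Submodule ℂ H :=
  Submodule.span ℂ (b '' {j : ℕ+ | (j : ℕ) ≤ n})

theorem LspanP_fd (b : HilbertBasis ℕ+ ℂ H) (n : ℕ) : FiniteDimensional ℂ (LspanP b n) := by
  refine FiniteDimensional.span_of_finite ℂ (Set.Finite.image b ?_)
  have : {j : ℕ+ | (j : ℕ) ≤ n} = ((↑) : ℕ+ → ℕ) ⁻¹' Set.Iic n := rfl
  rw [this]
  exact (Set.finite_Iic n).preimage (Set.injOn_of_injective PNat.coe_injective)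

/-- `P_n` for a basis indexed by positive integers. -/
def PprojP (b : HilbertBasis ℕ+ ℂ H) (n : ℕ) : H →L[ℂ] H := projCLM (LspanP b n) (LspanP_fd b n)

/-! The finite-rank truncations `P_m F` approximate a compact `F` in norm. For such a truncation
the hypothesis makes the two-sided orbit sum `G = Σ_{l ≥ 0} T^{lN} F + Σ_{l ≥ 1} S^{lN} F`
converge, with `‖G - F‖` small once `N = n_k` with `k` large. Since `S^N` inverts `T^N`,
applying `T^N` only shifts the index in both sums, so `G` is fixed by `T^N`, hence also by `S^N`. -/

open Topology

section IterateSums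

variable {E : Type*} [AddCommGroup E] [TopologicalSpace E] [IsTopologicalAddGroup E] [T2Space E]
  {Φ : Type*} [FunLike Φ E E] [AddMonoidHomClass Φ E E]

/-- `f` shifts both orbits by one step: `f x` joins the forward sum and `x = f (g x)` leaves the
backward one. -/
theorem isFixedPt_add_tsum_iterate_add_tsum_iterate (f : Φ) (hf : Continuous f) {g : E → E}
    (hfg : Function.LeftInverse f g) {x : E} (hfx : Summable fun l => f^[l + 1] x)
    (hgx : Summable fun l => g^[l + 1] x) :
    Function.IsFixedPt f (x + ∑' l, f^[l + 1] x + ∑' l, g^[l + 1] x) := by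
  have hforward : f (∑' l, f^[l + 1] x) = ∑' l, f^[l + 1 + 1] x := by
    rw [hfx.map_tsum f hf]
    simp only [Function.iterate_succ_apply']
  have hbackward : f (∑' l, g^[l + 1] x) = x + ∑' l, g^[l + 1] x := by
    have hgx₀ : Summable fun l => g^[l] x := (summable_nat_add_iff 1).mp hgx
    calc f (∑' l, g^[l + 1] x) = ∑' l, f (g^[l + 1] x) := hgx.map_tsum f hf
      _ = ∑' l, g^[l] x := tsum_congr fun l => by rw [Function.iterate_succ_apply', hfg]
      _ = x + ∑' l, g^[l + 1] x := by rw [hgx₀.tsum_eq_zero_add, Function.iterate_zero_apply]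
  rw [Function.IsFixedPt, map_add, map_add, hforward, hbackward, hfx.tsum_eq_zero_add]
  simp only [zero_add, Function.iterate_one]
  abel

end IterateSums

section CompactApprox

variable {𝕜 E F : Type*} [RCLike 𝕜] [NormedAddCommGroup E] [InnerProductSpace 𝕜 E]
  [NormedAddCommGroup F] [NormedSpace 𝕜 F] {ι : Type*} [Preorder ι]

theorem antitone_norm_sub_starProjection {K : ι → Submodule 𝕜 E}
    [∀ i, (K i).HasOrthogonalProjection] (hK : Monotone K) (y : E) :
    Antitone fun i => ‖y - (K i).starProjection y‖ := by
  intro i j hij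
  change ‖y - (K j).starProjection y‖ ≤ _
  rw [Submodule.starProjection_minimal]
  exact ciInf_le ⟨0, Set.forall_mem_range.mpr fun _ => norm_nonneg _⟩
    (⟨_, hK hij ((K i).starProjection_apply_mem y)⟩ : K j)

/-- By Dini's theorem, `y ↦ ‖y - P_i y‖` decreases to `0` uniformly on the compact closure of
the image of the unit ball. -/
theorem tendsto_norm_sub_starProjection_comp [IsDirectedOrder ι] [Nonempty ι]
    {K : ι → Submodule 𝕜 E} [∀ i, (K i).HasOrthogonalProjection] (hK : Monotone K)
    (hdense : ⊤ ≤ (⨆ i, K i).topologicalClosure) {T : F →L[𝕜] E} (hT : IsCompactOperator T) :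
    Tendsto (fun i => ‖T - (K i).starProjection ∘L T‖) atTop (𝓝 0) := by
  set C := closure ((T : F →ₗ[𝕜] E) '' Metric.closedBall 0 1)
  have hC : IsCompact C := hT.isCompact_closure_image_closedBall 1
  have hunif : TendstoUniformlyOn (fun i y => ‖y - (K i).starProjection y‖) 0 atTop C := by
    refine Antitone.tendstoUniformlyOn_of_forall_tendsto hC (fun i => ?_)
      (fun y _ => antitone_norm_sub_starProjection hK y) continuousOn_const (fun y _ => ?_)
    · exact (continuous_id.sub (K i).starProjection.continuous).norm.continuousOn
    · simpa using ((Submodule.starProjection_tendsto_self K hK y hdense).const_sub y).norm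
  refine NormedAddGroup.tendsto_nhds_zero.mpr fun ε hε => ?_
  filter_upwards [Metric.tendstoUniformlyOn_iff.mp hunif (ε / 2) (half_pos hε)] with i hi
  refine lt_of_le_of_lt ?_ (half_lt_self hε)
  rw [norm_norm]
  refine ContinuousLinearMap.opNorm_le_of_unit_norm (half_pos hε).le fun x hx => ?_
  have hTx : T x ∈ C := subset_closure ⟨x, by simp [hx], rfl⟩
  simpa using (hi (T x) hTx).le

end CompactApprox

section Pproj

variable (b : HilbertBasis ℕ ℂ H)

instance (m : ℕ) : FiniteDimensional ℂ (Lspan b m) := Lspan_fd b m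

theorem monotone_Lspan : Monotone (Lspan b) := fun _ _ h =>
  Submodule.span_mono (Set.image_mono (Set.Iio_subset_Iio h))

theorem top_le_topologicalClosure_iSup_Lspan : ⊤ ≤ (⨆ m, Lspan b m).topologicalClosure := by
  have hunion : ⋃ m, b '' Set.Iio m = Set.range b := by
    simp only [← Set.image_iUnion, Set.iUnion_Iio, Set.image_univ]
  simp only [Lspan, ← Submodule.span_iUnion, hunion, b.dense_span, le_refl]

theorem tendsto_norm_sub_Pproj_comp {F : H →L[ℂ] H} (hF : IsCompactOperator F) :
    Tendsto (fun m => ‖F - Pproj b m ∘L F‖) atTop (𝓝 0) :=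
  tendsto_norm_sub_starProjection_comp (monotone_Lspan b)
    (top_le_topologicalClosure_iSup_Lspan b) hF

end Pproj

theorem iterate_mul_mul {M : Type*} [Monoid M] (a b : M) (n : ℕ) :
    (fun x => a * x * b)^[n] = fun x => a ^ n * x * b ^ n := by
  induction n with
  | zero => funext x; simp
  | succ n ih =>
    funext x
    rw [Function.iterate_succ_apply', ih, pow_succ', pow_succ]
    simp only [mul_assoc]

section Tpow

variable (W : H ≃L[ℂ] H) (U : H →L[ℂ] H)

theorem Spow_eq_Tpow : Spow W U = Tpow W.symm (star U) := rfl

theorem Tpow_eq_mulLeftRight (n : ℕ) :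
    Tpow W U n = ContinuousLinearMap.mulLeftRight ℂ (H →L[ℂ] H) ((W : H →L[ℂ] H) ^ n) (U ^ n) :=
  rfl

theorem Tpow_eq_iterate (n : ℕ) : Tpow W U n = (fun F => (W : H →L[ℂ] H) * F * U)^[n] :=
  (iterate_mul_mul _ _ n).symm

theorem Tpow_mul_eq_iterate (l n : ℕ) : Tpow W U (l * n) = (Tpow W U n)^[l] := by
  rw [Tpow_eq_iterate, Tpow_eq_iterate, ← Function.iterate_mul, mul_comm]

theorem Spow_mul_eq_iterate (l n : ℕ) : Spow W U (l * n) = (Spow W U n)^[l] :=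
  Tpow_mul_eq_iterate W.symm (star U) l n

/-- The operator `G_k` of the construction, with `N = n_k`. -/
def orbitSum (N : ℕ) (F : H →L[ℂ] H) : H →L[ℂ] H :=
  F + ∑' l, Tpow W U ((l + 1) * N) F + ∑' l, Spow W U ((l + 1) * N) F

theorem isCompactOperator_orbitSum (N : ℕ) {F : H →L[ℂ] H} (hF : IsCompactOperator F) :
    IsCompactOperator (orbitSum W U N F) := by
  have hclosed : IsClosed (B0 (H := H) : Set (H →L[ℂ] H)) := isClosed_setOfPred_isCompactOperator
  exact B0.add_mem (B0.add_mem hF (tsum_mem hclosed fun l => Tpow_mem W U _ F hF))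
    (tsum_mem hclosed fun l => Spow_mem W U _ F hF)

variable {U}

theorem leftInverse_Tpow_Spow (hU : U ∈ unitary (H →L[ℂ] H)) (n : ℕ) :
    Function.LeftInverse (Tpow W U n) (Spow W U n) := by
  intro F
  have hW : (W : H →L[ℂ] H) ^ n * (W.symm : H →L[ℂ] H) ^ n = 1 :=
    pow_mul_pow_eq_one n W.coe_comp_coe_symm
  have hU' : star U ^ n * U ^ n = 1 := by
    rw [← star_pow]; exact Unitary.star_mul_self_of_mem (pow_mem hU n)
  calc Tpow W U n (Spow W U n F)
      = ((W : H →L[ℂ] H) ^ n * (W.symm : H →L[ℂ] H) ^ n) * F * (star U ^ n * U ^ n) := by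
        simp only [Tpow, Spow, ← ContinuousLinearMap.mul_def, mul_assoc]
    _ = F := by rw [hW, hU', one_mul, mul_one]

theorem leftInverse_Spow_Tpow (hU : U ∈ unitary (H →L[ℂ] H)) (n : ℕ) :
    Function.LeftInverse (Spow W U n) (Tpow W U n) := by
  simpa [Spow_eq_Tpow] using leftInverse_Tpow_Spow W.symm (Unitary.star_mem hU) n

theorem norm_Tpow_comp_le (hU : U ∈ unitary (H →L[ℂ] H)) (n : ℕ)
    (A F : H →L[ℂ] H) : ‖Tpow W U n (A ∘L F)‖ ≤ ‖((W : H →L[ℂ] H) ^ n) ∘L A‖ * ‖F‖ := by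
  calc ‖Tpow W U n (A ∘L F)‖ = ‖(((W : H →L[ℂ] H) ^ n) ∘L A) * F * U ^ n‖ := rfl
    _ = ‖(((W : H →L[ℂ] H) ^ n) ∘L A) * F‖ := CStarRing.norm_mul_mem_unitary _ (pow_mem hU n)
    _ ≤ ‖((W : H →L[ℂ] H) ^ n) ∘L A‖ * ‖F‖ := norm_mul_le _ _

theorem isFixedPt_Tpow_orbitSum (hU : U ∈ unitary (H →L[ℂ] H)) (N : ℕ) {F : H →L[ℂ] H}
    (hT : Summable fun l => Tpow W U ((l + 1) * N) F)
    (hS : Summable fun l => Spow W U ((l + 1) * N) F) :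
    Function.IsFixedPt (Tpow W U N) (orbitSum W U N F) := by
  simp only [orbitSum, Tpow_mul_eq_iterate, Spow_mul_eq_iterate] at hT hS ⊢
  rw [Tpow_eq_mulLeftRight] at hT ⊢
  exact isFixedPt_add_tsum_iterate_add_tsum_iterate _ (ContinuousLinearMap.continuous _)
    (leftInverse_Tpow_Spow W hU N) hT hS

theorem isFixedPt_Spow_orbitSum (hU : U ∈ unitary (H →L[ℂ] H)) (N : ℕ) {F : H →L[ℂ] H}
    (hT : Summable fun l => Tpow W U ((l + 1) * N) F)
    (hS : Summable fun l => Spow W U ((l + 1) * N) F) :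
    Function.IsFixedPt (Spow W U N) (orbitSum W U N F) :=
  (isFixedPt_Tpow_orbitSum W hU N hT hS).to_leftInverse (leftInverse_Spow_Tpow W hU N)

theorem summable_Tpow_comp (hU : U ∈ unitary (H →L[ℂ] H)) (N : ℕ) (A F : H →L[ℂ] H)
    (hA : Summable fun l => ‖((W : H →L[ℂ] H) ^ ((l + 1) * N)) ∘L A‖) :
    Summable fun l => Tpow W U ((l + 1) * N) (A ∘L F) :=
  (hA.mul_right ‖F‖).of_norm_bounded fun l => norm_Tpow_comp_le W hU _ A F

theorem norm_tsum_Tpow_comp_le (hU : U ∈ unitary (H →L[ℂ] H)) (N : ℕ) (A F : H →L[ℂ] H)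
    (hA : Summable fun l => ‖((W : H →L[ℂ] H) ^ ((l + 1) * N)) ∘L A‖) :
    ‖∑' l, Tpow W U ((l + 1) * N) (A ∘L F)‖ ≤
      (∑' l, ‖((W : H →L[ℂ] H) ^ ((l + 1) * N)) ∘L A‖) * ‖F‖ :=
  tsum_of_norm_bounded (hA.hasSum.mul_right ‖F‖) fun l => norm_Tpow_comp_le W hU _ A F

theorem norm_sub_orbitSum_comp_le (hU : U ∈ unitary (H →L[ℂ] H)) (N : ℕ) (A F : H →L[ℂ] H)
    (hA : Summable fun l => ‖((W : H →L[ℂ] H) ^ ((l + 1) * N)) ∘L A‖)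
    (hA' : Summable fun l => ‖((W.symm : H →L[ℂ] H) ^ ((l + 1) * N)) ∘L A‖) :
    ‖F - orbitSum W U N (A ∘L F)‖ ≤ ‖F - A ∘L F‖ +
      (∑' l, ‖((W : H →L[ℂ] H) ^ ((l + 1) * N)) ∘L A‖) * ‖F‖ +
      (∑' l, ‖((W.symm : H →L[ℂ] H) ^ ((l + 1) * N)) ∘L A‖) * ‖F‖ := by
  have hT := norm_tsum_Tpow_comp_le W hU N A F hA
  have hS := norm_tsum_Tpow_comp_le W.symm (Unitary.star_mem hU) N A F hA'
  rw [orbitSum, sub_add_eq_sub_sub, sub_add_eq_sub_sub]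
  exact (norm_sub_le _ _).trans
    (add_le_add ((norm_sub_le _ _).trans (add_le_add le_rfl hT)) hS)

theorem exists_periodic_near (hU : U ∈ unitary (H →L[ℂ] H)) {A F : H →L[ℂ] H}
    (hF : IsCompactOperator F) {n : ℕ → ℕ} (hn : StrictMono n)
    (hsum : ∀ k, Summable (fun l => ‖((W : H →L[ℂ] H) ^ ((l + 1) * n k)) ∘L A‖) ∧
      Summable (fun l => ‖((W.symm : H →L[ℂ] H) ^ ((l + 1) * n k)) ∘L A‖))
    (hT : Tendsto (fun k => ∑' l, ‖((W : H →L[ℂ] H) ^ ((l + 1) * n k)) ∘L A‖) atTop (𝓝 0))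
    (hS : Tendsto (fun k => ∑' l, ‖((W.symm : H →L[ℂ] H) ^ ((l + 1) * n k)) ∘L A‖) atTop (𝓝 0))
    {ε : ℝ} (hε : ‖F - A ∘L F‖ < ε) :
    ∃ G : H →L[ℂ] H, IsCompactOperator G ∧
      (∃ N, 0 < N ∧ (∀ k, Tpow W U (k * N) G = G) ∧ ∀ k, Spow W U (k * N) G = G) ∧
      ‖F - G‖ < ε := by
  set δ := (ε - ‖F - A ∘L F‖) / 2 with hδ_def
  have hδ : 0 < δ := half_pos (sub_pos.mpr hε)
  have hT' := (hT.mul_const ‖F‖).eventually_lt_const (zero_mul ‖F‖ ▸ hδ)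
  have hS' := (hS.mul_const ‖F‖).eventually_lt_const (zero_mul ‖F‖ ▸ hδ)
  obtain ⟨k, ⟨hTk, hSk⟩, hk⟩ := ((hT'.and hS').and (eventually_ge_atTop 1)).exists
  have hN : 0 < n k := hk.trans (hn.id_le k)
  have hTsum := summable_Tpow_comp W hU (n k) A F (hsum k).1
  have hSsum := summable_Tpow_comp W.symm (Unitary.star_mem hU) (n k) A F (hsum k).2
  refine ⟨orbitSum W U (n k) (A ∘L F), isCompactOperator_orbitSum W U _ (hF.clm_comp A),
    ⟨n k, hN, fun j => ?_, fun j => ?_⟩, ?_⟩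
  · rw [Tpow_mul_eq_iterate]
    exact (isFixedPt_Tpow_orbitSum W hU _ hTsum hSsum).iterate j
  · rw [Spow_mul_eq_iterate]
    exact (isFixedPt_Spow_orbitSum W hU _ hTsum hSsum).iterate j
  · have := norm_sub_orbitSum_comp_le W hU (n k) A F (hsum k).1 (hsum k).2
    linarith

end Tpow

/-- sufficient condition for density of the periodic elements of
`{T^n}` and `{S^n}` in `B₀(H)`. -/
theorem stmt14 (b : HilbertBasis ℕ ℂ H) (W : H ≃L[ℂ] H) (U : H →L[ℂ] H)
    (hU : U ∈ unitary (H →L[ℂ] H))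
    (hyp : ∀ m : ℕ, ∃ n : ℕ → ℕ, StrictMono n ∧
      (∀ k, Summable (fun l : ℕ => ‖((W : H →L[ℂ] H) ^ ((l + 1) * n k)) ∘L Pproj b m‖) ∧
        Summable (fun l : ℕ => ‖((W.symm : H →L[ℂ] H) ^ ((l + 1) * n k)) ∘L Pproj b m‖)) ∧
      Filter.Tendsto
        (fun k => ∑' l : ℕ, ‖((W : H →L[ℂ] H) ^ ((l + 1) * n k)) ∘L Pproj b m‖)
        atTop (nhds 0) ∧
      Filter.Tendsto
        (fun k => ∑' l : ℕ, ‖((W.symm : H →L[ℂ] H) ^ ((l + 1) * n k)) ∘L Pproj b m‖)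
        atTop (nhds 0)) :
    (∀ F : H →L[ℂ] H, IsCompactOperator F → ∀ ε > (0 : ℝ),
      ∃ G : H →L[ℂ] H, IsCompactOperator G ∧
        (∃ N' : ℕ, 0 < N' ∧ ∀ k : ℕ, Tpow W U (k * N') G = G) ∧ ‖F - G‖ < ε) ∧
    (∀ F : H →L[ℂ] H, IsCompactOperator F → ∀ ε > (0 : ℝ),
      ∃ G : H →L[ℂ] H, IsCompactOperator G ∧
        (∃ N' : ℕ, 0 < N' ∧ ∀ k : ℕ, Spow W U (k * N') G = G) ∧ ‖F - G‖ < ε) := by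
  have hnear : ∀ F : H →L[ℂ] H, IsCompactOperator F → ∀ ε > (0 : ℝ),
      ∃ G : H →L[ℂ] H, IsCompactOperator G ∧
        (∃ N, 0 < N ∧ (∀ k, Tpow W U (k * N) G = G) ∧ ∀ k, Spow W U (k * N) G = G) ∧
        ‖F - G‖ < ε := by
    intro F hF ε hε
    obtain ⟨m, hm⟩ := ((tendsto_norm_sub_Pproj_comp b hF).eventually_lt_const hε).exists
    obtain ⟨n, hn, hsum, hT, hS⟩ := hyp m
    exact exists_periodic_near W hU hF hn hsum hT hS hm
  constructor
  · intro F hF ε hε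
    obtain ⟨G, hG, ⟨N, hN, hTG, -⟩, hFG⟩ := hnear F hF ε hε
    exact ⟨G, hG, ⟨N, hN, hTG⟩, hFG⟩
  · intro F hF ε hε
    obtain ⟨G, hG, ⟨N, hN, -, hSG⟩, hFG⟩ := hnear F hF ε hε
    exact ⟨G, hG, ⟨N, hN, hSG⟩, hFG⟩

end
end

section
/- Let U, W ∈ B(H) with W invertible and U unitary, and define C^{(n)}_{U,W} := (1/2)(T_{U,W}^n + S_{U,W}^n) on B_0(H). Suppose for each m ∈ ℕ there exist sequences {E_k}, {R_k} of subspaces of L_m with L_m = E_k ⊕ R_k (orthogonal direct sum inside L_m) and a strictly increasing sequence {n_k} ⊆ ℕ such that ‖W^{n_k} P_m‖ → 0, ‖W^{−n_k} P_m‖ → 0, ‖W^{2 n_k} P_{E_k}‖ → 0, and ‖W^{−2 n_k} P_{R_k}‖ → 0 as k → ∞. Then the sequence (C^{(n)}_{U,W})_{n∈ℕ} is topologically transitive on B_0(H): for any nonempty open O_1, O_2 ⊆ B_0(H) there is k with C^{(n_k)}_{U,W}(O_1) ∩ O_2 ≠ ∅. -/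
set_option linter.unusedSectionVars false
set_option linter.unusedVariables false

open scoped InnerProductSpace
open Filter

noncomputable section

variable {H : Type*} [NormedAddCommGroup H] [InnerProductSpace ℂ H] [CompleteSpace H]

/-!
Given compact `F`, `G`, first choose `m` with `P_m F ≈ F` and `P_m G ≈ G`: the projections `P_m`
tend strongly to the identity, hence uniformly on the relatively compact images of the unit ball.
With `L_m = E_k ⊕ R_k`, the transit vector `V = P_m F + 2 T^n (P_{E_k} G) + 2 S^n (P_{R_k} G)`,
`n = n_k`, is close to `F`, and because `T^n S^n = S^n T^n = id` and `P_{E_k} + P_{R_k} = P_m`,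
`C^{(n)} V = C^{(n)} (P_m F) + T^{2n} (P_{E_k} G) + S^{2n} (P_{R_k} G) + P_m G`
is close to `G`. Every error term is bounded by `‖F‖` or `‖G‖` times one of the four norms that
tend to zero.
-/

open Topology

section CompactOperator

variable {𝕜 E F G : Type*} [RCLike 𝕜] [NormedAddCommGroup E] [NormedSpace 𝕜 E]
  [NormedAddCommGroup F] [NormedSpace 𝕜 F] [NormedAddCommGroup G] [NormedSpace 𝕜 G]

/-- Equicontinuity upgrades the pointwise convergence to uniform convergence on the compact set
`closure (T '' closedBall 0 1)`. -/
theorem IsCompactOperator.tendsto_norm_comp_of_tendsto_apply {ι : Type*} {l : Filter ι}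
    {A : ι → F →L[𝕜] G} {C : ℝ} (hA : ∀ i, ‖A i‖ ≤ C)
    (hlim : ∀ y, Tendsto (fun i => A i y) l (𝓝 0)) {T : E →L[𝕜] F} (hT : IsCompactOperator T) :
    Tendsto (fun i => ‖A i ∘L T‖) l (𝓝 0) := by
  set S := closure (T '' Metric.closedBall 0 1)
  have hS : IsCompact S := hT.isCompact_closure_image_closedBall 1
  have hequi : Equicontinuous (DFunLike.coe ∘ A) :=
    ((NormedSpace.equicontinuous_TFAE A).out 5 1).mp (⟨C, hA⟩ : ∃ C, ∀ i, ‖A i‖ ≤ C)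
  have hunif : TendstoUniformlyOn (DFunLike.coe ∘ A) 0 l S :=
    UniformOnFun.tendsto_iff_tendstoUniformlyOn.mp
      ((EquicontinuousOn.tendsto_uniformOnFun_iff_pi' (𝔖 := {S})
        (by rintro _ rfl; exact hS) (by rintro _ rfl; exact hequi.equicontinuousOn S) l 0).mpr
        (tendsto_pi_nhds.mpr fun y => hlim y)) S rfl
  refine Metric.tendsto_nhds.mpr fun ε hε => ?_
  filter_upwards [Metric.tendstoUniformlyOn_iff.mp hunif (ε / 2) (half_pos hε)] with i hi
  have hbound : ‖A i ∘L T‖ ≤ ε / 2 :=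
    ContinuousLinearMap.opNorm_le_of_unit_norm (half_pos hε).le fun x hx => by
      simpa [dist_eq_norm] using (hi (T x) (subset_closure ⟨x, by simp [hx], rfl⟩)).le
  rw [dist_zero_right, norm_norm]
  linarith

end CompactOperator

namespace Submodule

variable {𝕜 X : Type*} [RCLike 𝕜] [NormedAddCommGroup X] [InnerProductSpace 𝕜 X]

theorem IsOrtho.starProjection_sup {E R : Submodule 𝕜 X} [E.HasOrthogonalProjection]
    [R.HasOrthogonalProjection] [(E ⊔ R).HasOrthogonalProjection] (hER : E ⟂ R) :
    (E ⊔ R).starProjection = E.starProjection + R.starProjection := by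
  ext x
  refine eq_starProjection_of_mem_orthogonal
    (add_mem (mem_sup_left (E.starProjection_apply_mem x))
      (mem_sup_right (R.starProjection_apply_mem x))) ?_
  rw [add_apply, ← inf_orthogonal, mem_inf]
  constructor
  · rw [← sub_sub]
    exact sub_mem (E.sub_starProjection_mem_orthogonal x) (hER.symm (R.starProjection_apply_mem x))
  · rw [sub_add_eq_sub_sub_swap]
    exact sub_mem (R.sub_starProjection_mem_orthogonal x)
      (hER (E.starProjection_apply_mem x))

theorem norm_comp_starProjection_comp_le {K L : Submodule 𝕜 X} [K.HasOrthogonalProjection]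
    [L.HasOrthogonalProjection] (hKL : K ≤ L) (A G V : X →L[𝕜] X) (hV : ‖V‖ ≤ 1) :
    ‖A ∘L (K.starProjection ∘L G) ∘L V‖ ≤ ‖A ∘L L.starProjection‖ * ‖G‖ := by
  have hLK (x : X) : L.starProjection (K.starProjection x) = K.starProjection x :=
    starProjection_eq_self_iff.mpr (hKL (K.starProjection_apply_mem x))
  calc ‖A ∘L (K.starProjection ∘L G) ∘L V‖
      = ‖(A ∘L L.starProjection) ∘L K.starProjection ∘L G ∘L V‖ := by
        congr 1
        ext x
        simp [hLK]
    _ ≤ ‖A ∘L L.starProjection‖ * (‖K.starProjection‖ * (‖G‖ * ‖V‖)) := by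
        grw [ContinuousLinearMap.opNorm_comp_le (A ∘L L.starProjection),
          ContinuousLinearMap.opNorm_comp_le K.starProjection, ContinuousLinearMap.opNorm_comp_le G]
    _ ≤ ‖A ∘L L.starProjection‖ * (1 * (‖G‖ * 1)) := by
        gcongr
        exact K.starProjection_norm_le
    _ = ‖A ∘L L.starProjection‖ * ‖G‖ := by ring

end Submodule

instance (b : HilbertBasis ℕ ℂ H) (m : ℕ) : FiniteDimensional ℂ (Lspan b m) :=
  Lspan_fd b m

theorem norm_Pproj_le (b : HilbertBasis ℕ ℂ H) (m : ℕ) : ‖Pproj b m‖ ≤ 1 :=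
  (Lspan b m).starProjection_norm_le

theorem Lspan_mono (b : HilbertBasis ℕ ℂ H) : Monotone (Lspan b) := fun _ _ h =>
  Submodule.span_mono (Set.image_mono (Set.Iio_subset_Iio h))

theorem iSup_Lspan (b : HilbertBasis ℕ ℂ H) : ⨆ m, Lspan b m = Submodule.span ℂ (Set.range b) := by
  simp_rw [Lspan]
  rw [Submodule.iSup_span, ← Set.image_iUnion, Set.iUnion_Iio, Set.image_univ]

theorem tendsto_Pproj_apply (b : HilbertBasis ℕ ℂ H) (y : H) :
    Tendsto (fun m => Pproj b m y) atTop (𝓝 y) :=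
  Submodule.starProjection_tendsto_self _ (Lspan_mono b) y (by rw [iSup_Lspan, b.dense_span])

theorem tendsto_norm_Pproj_comp_sub (b : HilbertBasis ℕ ℂ H) {F : H →L[ℂ] H}
    (hF : IsCompactOperator F) : Tendsto (fun m => ‖Pproj b m ∘L F - F‖) atTop (𝓝 0) := by
  have hA (m : ℕ) : ‖Pproj b m - .id ℂ H‖ ≤ 1 + ‖ContinuousLinearMap.id ℂ H‖ :=
    (norm_sub_le _ _).trans (by grw [norm_Pproj_le])
  have hlim (y : H) : Tendsto (fun m => (Pproj b m - .id ℂ H) y) atTop (𝓝 0) := by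
    simpa using (tendsto_Pproj_apply b y).sub_const y
  refine (hF.tendsto_norm_comp_of_tendsto_apply hA hlim).congr fun m => ?_
  rw [ContinuousLinearMap.sub_comp, ContinuousLinearMap.id_comp]

theorem norm_le_one_of_mem_unitary {U : H →L[ℂ] H} (hU : U ∈ unitary (H →L[ℂ] H)) : ‖U‖ ≤ 1 :=
  ContinuousLinearMap.opNorm_le_bound _ zero_le_one fun x => by
    rw [ContinuousLinearMap.norm_map_of_mem_unitary hU, one_mul]

section Cosine

variable (W : H ≃L[ℂ] H) (U : H →L[ℂ] H) (n : ℕ)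

theorem Tpow_eq_mul (A : H →L[ℂ] H) : Tpow W U n A = (W : H →L[ℂ] H) ^ n * A * U ^ n :=
  rfl

theorem Spow_eq_mul (A : H →L[ℂ] H) :
    Spow W U n A = (W.symm : H →L[ℂ] H) ^ n * A * star U ^ n :=
  rfl

theorem Tpow_add (A B : H →L[ℂ] H) : Tpow W U n (A + B) = Tpow W U n A + Tpow W U n B := by
  simp only [Tpow_eq_mul, mul_add, add_mul]

theorem Spow_add (A B : H →L[ℂ] H) : Spow W U n (A + B) = Spow W U n A + Spow W U n B := by
  simp only [Spow_eq_mul, mul_add, add_mul]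

theorem Tpow_smul (c : ℂ) (A : H →L[ℂ] H) : Tpow W U n (c • A) = c • Tpow W U n A := by
  simp only [Tpow_eq_mul, mul_smul_comm, smul_mul_assoc]

theorem Spow_smul (c : ℂ) (A : H →L[ℂ] H) : Spow W U n (c • A) = c • Spow W U n A := by
  simp only [Spow_eq_mul, mul_smul_comm, smul_mul_assoc]

theorem Tpow_Tpow (A : H →L[ℂ] H) : Tpow W U n (Tpow W U n A) = Tpow W U (2 * n) A := by
  simp only [Tpow_eq_mul, two_mul, pow_add, mul_assoc]

theorem Spow_Spow (A : H →L[ℂ] H) : Spow W U n (Spow W U n A) = Spow W U (2 * n) A := by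
  simp only [Spow_eq_mul, two_mul, pow_add, mul_assoc]

def transit (A B D : H →L[ℂ] H) : H →L[ℂ] H :=
  A + (2 : ℂ) • Tpow W U n B + (2 : ℂ) • Spow W U n D

theorem transit_mem {A B D : H →L[ℂ] H} (hA : IsCompactOperator A) (hB : IsCompactOperator B)
    (hD : IsCompactOperator D) : transit W U n A B D ∈ B0 (H := H) :=
  add_mem (add_mem hA (Submodule.smul_mem _ _ (Tpow_mem W U n B hB)))
    (Submodule.smul_mem _ _ (Spow_mem W U n D hD))

theorem norm_Cpow_le (A : H →L[ℂ] H) :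
    ‖Cpow W U n A‖ ≤ (‖Tpow W U n A‖ + ‖Spow W U n A‖) / 2 := by
  rw [Cpow, norm_smul, norm_inv, RCLike.norm_ofNat]
  linarith [norm_add_le (Tpow W U n A) (Spow W U n A)]

variable {U}

theorem Spow_Tpow (hU : U ∈ unitary (H →L[ℂ] H)) (A : H →L[ℂ] H) :
    Spow W U n (Tpow W U n A) = A := by
  have hW : (W.symm : H →L[ℂ] H) * W = 1 := W.coe_symm_comp_coe
  rw [Spow_eq_mul, Tpow_eq_mul]
  calc _ = ((W.symm : H →L[ℂ] H) ^ n * W ^ n) * A * (U ^ n * star U ^ n) := by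
        simp only [mul_assoc]
    _ = A := by
        rw [pow_mul_pow_eq_one n hW, pow_mul_pow_eq_one n (Unitary.mul_star_self_of_mem hU),
          one_mul, mul_one]

theorem Tpow_Spow (hU : U ∈ unitary (H →L[ℂ] H)) (A : H →L[ℂ] H) :
    Tpow W U n (Spow W U n A) = A := by
  have hW : (W : H →L[ℂ] H) * W.symm = 1 := W.coe_comp_coe_symm
  rw [Spow_eq_mul, Tpow_eq_mul]
  calc _ = ((W : H →L[ℂ] H) ^ n * W.symm ^ n) * A * (star U ^ n * U ^ n) := by
        simp only [mul_assoc]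
    _ = A := by
        rw [pow_mul_pow_eq_one n hW, pow_mul_pow_eq_one n (Unitary.star_mul_self_of_mem hU),
          one_mul, mul_one]

theorem Cpow_transit (hU : U ∈ unitary (H →L[ℂ] H)) (A B D : H →L[ℂ] H) :
    Cpow W U n (transit W U n A B D) =
      Cpow W U n A + Tpow W U (2 * n) B + Spow W U (2 * n) D + (B + D) := by
  simp only [transit, Cpow, Tpow_add, Spow_add, Tpow_smul, Spow_smul, Tpow_Tpow, Spow_Spow,
    Tpow_Spow W n hU, Spow_Tpow W n hU]
  module

section Projections

variable {E R L : Submodule ℂ H} [E.HasOrthogonalProjection] [R.HasOrthogonalProjection]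
  [L.HasOrthogonalProjection]

theorem norm_Tpow_starProjection_comp_le (hU : U ∈ unitary (H →L[ℂ] H)) (hEL : E ≤ L)
    (G : H →L[ℂ] H) :
    ‖Tpow W U n (E.starProjection ∘L G)‖ ≤ ‖((W : H →L[ℂ] H) ^ n) ∘L L.starProjection‖ * ‖G‖ :=
  Submodule.norm_comp_starProjection_comp_le hEL _ _ _ (norm_le_one_of_mem_unitary (pow_mem hU n))

theorem norm_Spow_starProjection_comp_le (hU : U ∈ unitary (H →L[ℂ] H)) (hEL : E ≤ L)
    (G : H →L[ℂ] H) :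
    ‖Spow W U n (E.starProjection ∘L G)‖ ≤
      ‖((W.symm : H →L[ℂ] H) ^ n) ∘L L.starProjection‖ * ‖G‖ :=
  Submodule.norm_comp_starProjection_comp_le hEL _ _ _
    (norm_le_one_of_mem_unitary (pow_mem (Unitary.star_mem hU) n))

theorem norm_transit_sub_le (hU : U ∈ unitary (H →L[ℂ] H)) (hEL : E ≤ L) (hRL : R ≤ L)
    (F G : H →L[ℂ] H) :
    ‖transit W U n (L.starProjection ∘L F) (E.starProjection ∘L G) (R.starProjection ∘L G) - F‖ ≤
      ‖L.starProjection ∘L F - F‖ + 2 * (‖((W : H →L[ℂ] H) ^ n) ∘L L.starProjection‖ +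
        ‖((W.symm : H →L[ℂ] H) ^ n) ∘L L.starProjection‖) * ‖G‖ := by
  have hT := norm_Tpow_starProjection_comp_le W n hU hEL G
  have hS := norm_Spow_starProjection_comp_le W n hU hRL G
  calc _ = ‖(L.starProjection ∘L F - F) + (2 : ℂ) • Tpow W U n (E.starProjection ∘L G) +
        (2 : ℂ) • Spow W U n (R.starProjection ∘L G)‖ := by
        rw [transit]
        abel_nf
    _ ≤ ‖L.starProjection ∘L F - F‖ + 2 * ‖Tpow W U n (E.starProjection ∘L G)‖ +
        2 * ‖Spow W U n (R.starProjection ∘L G)‖ := by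
        refine norm_add₃_le.trans (le_of_eq ?_)
        simp [norm_smul]
    _ ≤ _ := by linarith

theorem norm_Cpow_transit_sub_le (hU : U ∈ unitary (H →L[ℂ] H)) (hER : E ⟂ R) (hL : E ⊔ R = L)
    (F G : H →L[ℂ] H) :
    ‖Cpow W U n (transit W U n (L.starProjection ∘L F) (E.starProjection ∘L G)
        (R.starProjection ∘L G)) - G‖ ≤
      (‖((W : H →L[ℂ] H) ^ n) ∘L L.starProjection‖ +
        ‖((W.symm : H →L[ℂ] H) ^ n) ∘L L.starProjection‖) / 2 * ‖F‖ +
      (‖((W : H →L[ℂ] H) ^ (2 * n)) ∘L E.starProjection‖ +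
        ‖((W.symm : H →L[ℂ] H) ^ (2 * n)) ∘L R.starProjection‖) * ‖G‖ +
      ‖L.starProjection ∘L G - G‖ := by
  subst hL
  have hC := norm_Cpow_le W U n ((E ⊔ R).starProjection ∘L F)
  have hT := norm_Tpow_starProjection_comp_le W n hU (le_refl (E ⊔ R)) F
  have hS := norm_Spow_starProjection_comp_le W n hU (le_refl (E ⊔ R)) F
  have hT₂ := norm_Tpow_starProjection_comp_le W (2 * n) hU (le_refl E) G
  have hS₂ := norm_Spow_starProjection_comp_le W (2 * n) hU (le_refl R) G
  have hsum : E.starProjection ∘L G + R.starProjection ∘L G = (E ⊔ R).starProjection ∘L G := by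
    rw [← ContinuousLinearMap.add_comp, hER.starProjection_sup]
  rw [Cpow_transit W n hU, hsum, add_sub_assoc]
  linarith [norm_add₄_le (a := Cpow W U n ((E ⊔ R).starProjection ∘L F))
    (b := Tpow W U (2 * n) (E.starProjection ∘L G)) (c := Spow W U (2 * n) (R.starProjection ∘L G))
    (d := (E ⊔ R).starProjection ∘L G - G)]

end Projections

end Cosine

theorem eventually_transit_near (W : H ≃L[ℂ] H) {U : H →L[ℂ] H} (hU : U ∈ unitary (H →L[ℂ] H))
    {L : Submodule ℂ H} [L.HasOrthogonalProjection] {n : ℕ → ℕ} {E R : ℕ → Submodule ℂ H}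
    [∀ k, (E k).HasOrthogonalProjection] [∀ k, (R k).HasOrthogonalProjection]
    (hER : ∀ k, E k ⟂ R k) (hL : ∀ k, E k ⊔ R k = L)
    (hW : Tendsto (fun k => ‖((W : H →L[ℂ] H) ^ n k) ∘L L.starProjection‖) atTop (𝓝 0))
    (hW' : Tendsto (fun k => ‖((W.symm : H →L[ℂ] H) ^ n k) ∘L L.starProjection‖) atTop (𝓝 0))
    (hWE : Tendsto (fun k => ‖((W : H →L[ℂ] H) ^ (2 * n k)) ∘L (E k).starProjection‖) atTop
      (𝓝 0))
    (hW'R : Tendsto (fun k => ‖((W.symm : H →L[ℂ] H) ^ (2 * n k)) ∘L (R k).starProjection‖) atTop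
      (𝓝 0))
    {F G : H →L[ℂ] H} {ε₁ ε₂ : ℝ} (hF : ‖L.starProjection ∘L F - F‖ < ε₁)
    (hG : ‖L.starProjection ∘L G - G‖ < ε₂) :
    ∀ᶠ k in atTop,
      ‖transit W U (n k) (L.starProjection ∘L F) ((E k).starProjection ∘L G)
          ((R k).starProjection ∘L G) - F‖ < ε₁ ∧
      ‖Cpow W U (n k) (transit W U (n k) (L.starProjection ∘L F) ((E k).starProjection ∘L G)
          ((R k).starProjection ∘L G)) - G‖ < ε₂ := by
  have hlim₁ : Tendsto (fun k => ‖L.starProjection ∘L F - F‖ +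
      2 * (‖((W : H →L[ℂ] H) ^ n k) ∘L L.starProjection‖ +
        ‖((W.symm : H →L[ℂ] H) ^ n k) ∘L L.starProjection‖) * ‖G‖) atTop
      (𝓝 ‖L.starProjection ∘L F - F‖) := by
    simpa using tendsto_const_nhds.add (((hW.add hW').const_mul 2).mul_const _)
  have hlim₂ : Tendsto (fun k => (‖((W : H →L[ℂ] H) ^ n k) ∘L L.starProjection‖ +
      ‖((W.symm : H →L[ℂ] H) ^ n k) ∘L L.starProjection‖) / 2 * ‖F‖ +
      (‖((W : H →L[ℂ] H) ^ (2 * n k)) ∘L (E k).starProjection‖ +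
        ‖((W.symm : H →L[ℂ] H) ^ (2 * n k)) ∘L (R k).starProjection‖) * ‖G‖ +
      ‖L.starProjection ∘L G - G‖) atTop (𝓝 ‖L.starProjection ∘L G - G‖) := by
    simpa using ((((hW.add hW').div_const 2).mul_const _).add
      ((hWE.add hW'R).mul_const _)).add_const _
  filter_upwards [hlim₁.eventually_lt_const hF, hlim₂.eventually_lt_const hG] with k h₁ h₂
  have hEL : E k ≤ L := hL k ▸ le_sup_left
  have hRL : R k ≤ L := hL k ▸ le_sup_right
  exact ⟨(norm_transit_sub_le W (n k) hU hEL hRL F G).trans_lt h₁,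
    (norm_Cpow_transit_sub_le W (n k) hU (hER k) (hL k) F G).trans_lt h₂⟩

/-- sufficient condition for topological transitivity of the cosine
operator functions `C^{(n)}` on `B₀(H)`. -/
theorem stmt15 (b : HilbertBasis ℕ ℂ H) (W : H ≃L[ℂ] H) (U : H →L[ℂ] H)
    (hU : U ∈ unitary (H →L[ℂ] H))
    (hyp : ∀ m : ℕ, ∃ (n : ℕ → ℕ) (E R : ℕ → Submodule ℂ H)
      (hE : ∀ k, FiniteDimensional ℂ (E k)) (hR : ∀ k, FiniteDimensional ℂ (R k)),
      StrictMono n ∧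
      (∀ k, E k ⊔ R k = Lspan b m ∧ E k ⊓ R k = ⊥ ∧
        ∀ x ∈ E k, ∀ y ∈ R k, ⟪x, y⟫_ℂ = 0) ∧
      Filter.Tendsto (fun k => ‖((W : H →L[ℂ] H) ^ n k) ∘L Pproj b m‖) atTop (nhds 0) ∧
      Filter.Tendsto (fun k => ‖((W.symm : H →L[ℂ] H) ^ n k) ∘L Pproj b m‖) atTop (nhds 0) ∧
      Filter.Tendsto (fun k => ‖((W : H →L[ℂ] H) ^ (2 * n k)) ∘L projCLM (E k) (hE k)‖)
        atTop (nhds 0) ∧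
      Filter.Tendsto (fun k => ‖((W.symm : H →L[ℂ] H) ^ (2 * n k)) ∘L projCLM (R k) (hR k)‖)
        atTop (nhds 0)) :
    ∀ O₁ O₂ : Set ↥(B0 (H := H)), IsOpen O₁ → IsOpen O₂ → O₁.Nonempty → O₂.Nonempty →
      ∃ n : ℕ, 0 < n ∧ ∃ F ∈ O₁, CB0 W U n F ∈ O₂ := by
  intro O₁ O₂ hO₁ hO₂ ⟨⟨F, hFc⟩, hF⟩ ⟨⟨G, hGc⟩, hG⟩
  obtain ⟨ε₁, hε₁, hball₁⟩ := Metric.isOpen_iff.mp hO₁ _ hF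
  obtain ⟨ε₂, hε₂, hball₂⟩ := Metric.isOpen_iff.mp hO₂ _ hG
  obtain ⟨m, hmF, hmG⟩ := (((tendsto_norm_Pproj_comp_sub b hFc).eventually_lt_const hε₁).and
    ((tendsto_norm_Pproj_comp_sub b hGc).eventually_lt_const hε₂)).exists
  obtain ⟨n, E, R, hE, hR, hn, hER, hW, hW', hWE, hW'R⟩ := hyp m
  have := hE
  have := hR
  have hnear := eventually_transit_near W hU
    (fun k => Submodule.isOrtho_iff_inner_eq.mpr (hER k).2.2) (fun k => (hER k).1)
    hW hW' hWE hW'R hmF hmG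
  obtain ⟨k, hk, h₁, h₂⟩ := ((hn.tendsto_atTop.eventually_gt_atTop 0).and hnear).exists
  have hV := transit_mem W U (n k) (A := Pproj b m ∘L F) (B := (E k).starProjection ∘L G)
    (D := (R k).starProjection ∘L G) (hFc.clm_comp (Pproj b m))
    (hGc.clm_comp (E k).starProjection) (hGc.clm_comp (R k).starProjection)
  refine ⟨n k, hk, ⟨_, hV⟩, hball₁ ?_, hball₂ ?_⟩
  · rwa [Metric.mem_ball, Subtype.dist_eq, dist_eq_norm]
  · rwa [Metric.mem_ball, Subtype.dist_eq, dist_eq_norm]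

end
end
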